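/- arXiv:2411.10723 — 2 statements merged into one kernel-verified Lean document; each statement's English description precedes it below -/
import Mathlib

section
/- The inner product of the θ- and φ-derivatives of the UPA steering vector equals ȧ_θ^H ȧ_φ = (N_t(N_h²-1)/12)·π²·sinφ·sinθ·cosφ·cosθ. -/
/-!
Expanding the Kronecker products,
`ȧ_θ^H ȧ_φ = ‖a_v‖² (ȧ_{h,θ}^H ȧ_{h,φ}) + (ȧ_{h,θ}^H a_h) (a_v^H ȧ_{v,φ})`.
All entries of `a_h` and `a_v` are unimodular, so `‖a_v‖² = N_v` and `a_h` cancels from the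
remaining inner products: `ȧ_{h,θ}^H a_h` is a multiple of `∑ u_n = 0`, and `ȧ_{h,θ}^H ȧ_{h,φ}`
is `π² sin θ cos θ sin φ cos φ ∑ u_n²` with `∑ u_n² = N_h (N_h² - 1) / 12`.
-/

open Finset Complex

lemma sum_range_natCast (N : ℕ) : ∑ i ∈ range N, (i : ℝ) = N * ((N : ℝ) - 1) / 2 := by
  induction N with
  | zero => simp
  | succ n ih => rw [sum_range_succ, ih]; push_cast; ring

lemma sum_range_natCast_sq (N : ℕ) :
    ∑ i ∈ range N, (i : ℝ) ^ 2 = N * ((N : ℝ) - 1) * (2 * N - 1) / 6 := by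
  induction N with
  | zero => simp
  | succ n ih => rw [sum_range_succ, ih]; push_cast; ring

lemma sum_fin_centered_eq_zero (N : ℕ) :
    ∑ n : Fin N, (((n : ℝ) + 1) - ((N : ℝ) + 1) / 2) = 0 := by
  rw [Fin.sum_univ_eq_sum_range (fun i => ((i : ℝ) + 1) - ((N : ℝ) + 1) / 2),
    sum_sub_distrib, sum_add_distrib, sum_range_natCast]
  simp only [sum_const, card_range, nsmul_eq_mul]
  ring

lemma sum_fin_centered_sq (N : ℕ) :
    ∑ n : Fin N, (((n : ℝ) + 1) - ((N : ℝ) + 1) / 2) ^ 2 = N * ((N : ℝ) ^ 2 - 1) / 12 := by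
  rw [Fin.sum_univ_eq_sum_range (fun i => (((i : ℝ) + 1) - ((N : ℝ) + 1) / 2) ^ 2)]
  simp only [sub_sq, add_sq, sum_sub_distrib, sum_add_distrib, ← sum_mul, ← mul_sum,
    sum_range_natCast, sum_range_natCast_sq, sum_const, card_range, nsmul_eq_mul]
  ring

lemma star_exp_mul_exp_of_re_eq_zero {z : ℂ} (hz : z.re = 0) :
    star (exp z) * exp z = 1 := by
  rw [star_def, conj_mul', norm_exp, hz]
  simp

lemma sum_kronecker_star_mul {R ι κ : Type*} [CommSemiring R] [StarRing R]
    [Fintype ι] [Fintype κ]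
    (x z w : ι → R) (y t : κ → R) :
    ∑ p : ι × κ, star (x p.1 * y p.2) * (z p.1 * y p.2 + w p.1 * t p.2) =
      (∑ m, star (y m) * y m) * (∑ n, star (x n) * z n) +
        (∑ n, star (x n) * w n) * (∑ m, star (y m) * t m) := by
  rw [Fintype.sum_prod_type, mul_comm (∑ m, _), sum_mul_sum, sum_mul_sum, ← sum_add_distrib]
  refine sum_congr rfl fun n _ => ?_
  rw [← sum_add_distrib]
  refine sum_congr rfl fun m _ => ?_
  rw [star_mul']
  ring

lemma star_mul_mul_mul_of_star_mul_self_eq_one {R : Type*} [CommSemiring R] [StarRing R]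
    {a : R} (ha : star a * a = 1) (z w : R) : star (z * a) * (w * a) = star z * w := by
  rw [star_mul', mul_mul_mul_comm, ha, mul_one]

lemma star_mul_mul_of_star_mul_self_eq_one {R : Type*} [CommSemiring R] [StarRing R]
    {a : R} (ha : star a * a = 1) (z : R) : star (z * a) * a = star z := by
  rw [star_mul', mul_assoc, ha, mul_one]

lemma star_I_mul_ofReal_mul_I_mul_ofReal (r s : ℝ) :
    star (I * r) * (I * s) = ((r * s : ℝ) : ℂ) := by
  rw [star_def, map_mul, conj_I, conj_ofReal, ofReal_mul]
  linear_combination -(r * s : ℂ) * I_sq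

theorem stmt_8_general (Nh Nv : ℕ) (θ φ : ℝ)
    (ah dahθ dahφ : Fin Nh → ℂ) (av davφ : Fin Nv → ℂ)
    (hah : ∀ n : Fin Nh, ah n =
      Complex.exp (Complex.I * (Real.pi : ℂ) *
        ((((n : ℝ) + 1) - ((Nh : ℝ) + 1) / 2 : ℝ) : ℂ) *
        ((Real.sin θ : ℝ) : ℂ) * ((Real.sin φ : ℝ) : ℂ)))
    (hav : ∀ m : Fin Nv, av m =
      Complex.exp (Complex.I * (Real.pi : ℂ) *
        ((((m : ℝ) + 1) - ((Nv : ℝ) + 1) / 2 : ℝ) : ℂ) *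
        ((Real.cos φ : ℝ) : ℂ)))
    (hdahθ : ∀ n : Fin Nh, dahθ n =
      Complex.I * (Real.pi : ℂ) *
        ((((n : ℝ) + 1) - ((Nh : ℝ) + 1) / 2 : ℝ) : ℂ) *
        ((Real.cos θ : ℝ) : ℂ) * ((Real.sin φ : ℝ) : ℂ) * ah n)
    (hdahφ : ∀ n : Fin Nh, dahφ n =
      Complex.I * (Real.pi : ℂ) *
        ((((n : ℝ) + 1) - ((Nh : ℝ) + 1) / 2 : ℝ) : ℂ) *
        ((Real.sin θ : ℝ) : ℂ) * ((Real.cos φ : ℝ) : ℂ) * ah n)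
    (daθ daφ : Fin Nh × Fin Nv → ℂ)
    (hdaθ : ∀ p : Fin Nh × Fin Nv, daθ p = dahθ p.1 * av p.2)
    (hdaφ : ∀ p : Fin Nh × Fin Nv,
      daφ p = dahφ p.1 * av p.2 + ah p.1 * davφ p.2) :
    ∑ p : Fin Nh × Fin Nv, star (daθ p) * daφ p =
      ((((Nh : ℝ) * (Nv : ℝ) * ((Nh : ℝ) ^ 2 - 1) / 12) * Real.pi ^ 2 *
        Real.sin φ * Real.sin θ * Real.cos φ * Real.cos θ : ℝ) : ℂ) := by
  have hah_unit (n) : star (ah n) * ah n = 1 :=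
    hah n ▸ star_exp_mul_exp_of_re_eq_zero (by simp)
  have hav_unit (m) : star (av m) * av m = 1 :=
    hav m ▸ star_exp_mul_exp_of_re_eq_zero (by simp)
  have hcross : ∑ n, star (dahθ n) * ah n = 0 := by
    simp_rw [hdahθ, star_mul_mul_of_star_mul_self_eq_one (hah_unit _)]
    rw [← star_sum, ← sum_mul, ← sum_mul, ← mul_sum, ← ofReal_sum, sum_fin_centered_eq_zero]
    simp
  have hderiv : ∑ n, star (dahθ n) * dahφ n =
      ((Real.pi ^ 2 * Real.sin θ * Real.cos θ * Real.sin φ * Real.cos φ *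
        (Nh * ((Nh : ℝ) ^ 2 - 1) / 12) : ℝ) : ℂ) := by
    simp_rw [hdahθ, hdahφ, star_mul_mul_mul_of_star_mul_self_eq_one (hah_unit _)]
    rw [← sum_fin_centered_sq, mul_sum]
    simp only [mul_assoc, ← ofReal_mul, star_I_mul_ofReal_mul_I_mul_ofReal, ← ofReal_sum]
    exact congrArg _ (sum_congr rfl fun n _ => by ring)
  rw [sum_congr rfl fun p _ => by rw [hdaθ p, hdaφ p], sum_kronecker_star_mul, hcross,
    sum_congr rfl fun m _ => hav_unit m, sum_const, card_univ,
    Fintype.card_fin, nsmul_one, hderiv]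
  push_cast
  ring

/-- ȧ_θ^H ȧ_φ = (N_t(N_h²-1)/12)·π²·sinφ·sinθ·cosφ·cosθ for the UPA steering vector. -/
theorem stmt_8 (Nh Nv : ℕ) (hNh : 1 ≤ Nh) (hNv : 1 ≤ Nv) (θ φ : ℝ)
    (ah dahθ dahφ : Fin Nh → ℂ) (av davφ : Fin Nv → ℂ)
    (hah : ∀ n : Fin Nh, ah n =
      Complex.exp (Complex.I * (Real.pi : ℂ) *
        ((((n : ℝ) + 1) - ((Nh : ℝ) + 1) / 2 : ℝ) : ℂ) *
        ((Real.sin θ : ℝ) : ℂ) * ((Real.sin φ : ℝ) : ℂ)))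
    (hav : ∀ m : Fin Nv, av m =
      Complex.exp (Complex.I * (Real.pi : ℂ) *
        ((((m : ℝ) + 1) - ((Nv : ℝ) + 1) / 2 : ℝ) : ℂ) *
        ((Real.cos φ : ℝ) : ℂ)))
    (hdahθ : ∀ n : Fin Nh, dahθ n =
      Complex.I * (Real.pi : ℂ) *
        ((((n : ℝ) + 1) - ((Nh : ℝ) + 1) / 2 : ℝ) : ℂ) *
        ((Real.cos θ : ℝ) : ℂ) * ((Real.sin φ : ℝ) : ℂ) * ah n)
    (hdahφ : ∀ n : Fin Nh, dahφ n =
      Complex.I * (Real.pi : ℂ) *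
        ((((n : ℝ) + 1) - ((Nh : ℝ) + 1) / 2 : ℝ) : ℂ) *
        ((Real.sin θ : ℝ) : ℂ) * ((Real.cos φ : ℝ) : ℂ) * ah n)
    (hdavφ : ∀ m : Fin Nv, davφ m =
      -(Complex.I * (Real.pi : ℂ) *
        ((((m : ℝ) + 1) - ((Nv : ℝ) + 1) / 2 : ℝ) : ℂ) *
        ((Real.sin φ : ℝ) : ℂ)) * av m)
    (daθ daφ : Fin Nh × Fin Nv → ℂ)
    (hdaθ : ∀ p : Fin Nh × Fin Nv, daθ p = dahθ p.1 * av p.2)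
    (hdaφ : ∀ p : Fin Nh × Fin Nv,
      daφ p = dahφ p.1 * av p.2 + ah p.1 * davφ p.2) :
    ∑ p : Fin Nh × Fin Nv, star (daθ p) * daφ p =
      ((((Nh : ℝ) * (Nv : ℝ) * ((Nh : ℝ) ^ 2 - 1) / 12) * Real.pi ^ 2 *
        Real.sin φ * Real.sin θ * Real.cos φ * Real.cos θ : ℝ) : ℂ) :=
  stmt_8_general Nh Nv θ φ ah dahθ dahφ av davφ hah hav hdahθ hdahφ daθ daφ hdaθ hdaφ
end

section
/- For positive reals x, y and positive reference points x⁰, y⁰, the logarithm admits the lower bound ln(1 + x/y) ≥ ln(1 + x⁰/y⁰) + 2x⁰/(x⁰+y⁰) − (x⁰)²/((x⁰+y⁰)·x) − x⁰·y/((x⁰+y⁰)·y⁰), with equality when x = x⁰ and y = y⁰. -/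
/-- Concave minorant of ln(1 + x/y) around (x⁰, y⁰), with equality at (x⁰, y⁰). -/
theorem stmt_9 (x y x0 y0 : ℝ) (hx : 0 < x) (hy : 0 < y)
    (hx0 : 0 < x0) (hy0 : 0 < y0) :
    (Real.log (1 + x / y) ≥
      Real.log (1 + x0 / y0) + 2 * x0 / (x0 + y0)
        - x0 ^ 2 / ((x0 + y0) * x) - x0 * y / ((x0 + y0) * y0)) ∧
    (Real.log (1 + x0 / y0) =
      Real.log (1 + x0 / y0) + 2 * x0 / (x0 + y0)
        - x0 ^ 2 / ((x0 + y0) * x0) - x0 * y0 / ((x0 + y0) * y0)) := by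
  have hs : 0 < x0 + y0 := by linarith
  set a : ℝ := x0 / (x0 + y0) with ha_def
  set b : ℝ := y0 / (x0 + y0) with hb_def
  have ha : 0 ≤ a := by positivity
  have hb : 0 ≤ b := by positivity
  have hab : a + b = 1 := by rw [ha_def, hb_def]; field_simp
  have hxx0 : 0 < x / x0 := by positivity
  have hyy0 : 0 < y / y0 := by positivity
  -- weighted AM-GM
  have hgm : (x / x0) ^ a * (y / y0) ^ b ≤ a * (x / x0) + b * (y / y0) :=
    Real.geom_mean_le_arith_mean2_weighted ha hb hxx0.le hyy0.le hab
  have hsum : a * (x / x0) + b * (y / y0) = (x + y) / (x0 + y0) := by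
    rw [ha_def, hb_def]; field_simp
  have hlog1 : a * Real.log (x / x0) + b * Real.log (y / y0)
      ≤ Real.log ((x + y) / (x0 + y0)) := by
    have h := Real.log_le_log (by positivity) (hsum ▸ hgm)
    rwa [Real.log_mul (by positivity) (by positivity),
      Real.log_rpow hxx0, Real.log_rpow hyy0] at h
  -- log t ≤ t - 1 bounds
  have h2 : Real.log (x0 / x) ≤ x0 / x - 1 :=
    Real.log_le_sub_one_of_pos (by positivity)
  have h3 : Real.log (y / y0) ≤ y / y0 - 1 :=
    Real.log_le_sub_one_of_pos hyy0
  -- expand logs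
  have e1 : Real.log ((x + y) / (x0 + y0))
      = Real.log (x + y) - Real.log (x0 + y0) := Real.log_div (by positivity) hs.ne'
  have e2 : Real.log (x / x0) = Real.log x - Real.log x0 := Real.log_div hx.ne' hx0.ne'
  have e3 : Real.log (y / y0) = Real.log y - Real.log y0 := Real.log_div hy.ne' hy0.ne'
  have e4 : Real.log (x0 / x) = Real.log x0 - Real.log x := Real.log_div hx0.ne' hx.ne'
  have e5 : Real.log (1 + x / y) = Real.log (x + y) - Real.log y := by
    rw [show (1 : ℝ) + x / y = (x + y) / y by field_simp; ring,
      Real.log_div (by positivity) hy.ne']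
  have e6 : Real.log (1 + x0 / y0) = Real.log (x0 + y0) - Real.log y0 := by
    rw [show (1 : ℝ) + x0 / y0 = (x0 + y0) / y0 by field_simp; ring,
      Real.log_div (by positivity) hy0.ne']
  constructor
  · -- combine: log(1+x/y) ≥ log(1+x0/y0) + a*(2 - x0/x - y/y0)
    have key : Real.log (1 + x / y)
        ≥ Real.log (1 + x0 / y0) + a * (2 - x0 / x - y / y0) := by
      rw [e5, e6]
      rw [e1, e2, e3] at hlog1
      rw [e4] at h2
      rw [e3] at h3
      nlinarith [mul_nonneg ha (sub_nonneg.2 h2), mul_nonneg ha (sub_nonneg.2 h3),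
        hab]
    have : Real.log (1 + x0 / y0) + a * (2 - x0 / x - y / y0)
        = Real.log (1 + x0 / y0) + 2 * x0 / (x0 + y0)
          - x0 ^ 2 / ((x0 + y0) * x) - x0 * y / ((x0 + y0) * y0) := by
      rw [ha_def]; field_simp; ring
    linarith [key, this.ge, this.le]
  · field_simp; ring
end
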